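/- arXiv:1706.03617 — 3 statements merged into one kernel-verified Lean document; each statement's English description precedes it below -/
import Mathlib

section
/- The generating functions for plane overpartitions and for overpartitions into odd parts agree modulo 4: ∏_{n≥1} ((1+q^n)/(1-q^n))^n ≡ ∏_{n≥1} (1+q^(2n-1))/(1-q^(2n-1)) (mod 4), coefficient-wise. -/
open PowerSeries

/-- The formal power series `(1+q^k)/(1-q^k)` in `ℤ⟦q⟧`. -/
noncomputable def fps (k : ℕ) : PowerSeries ℤ :=
  (1 + (PowerSeries.X : PowerSeries ℤ) ^ k) *
    PowerSeries.invOfUnit (1 - (PowerSeries.X : PowerSeries ℤ) ^ k) 1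

/-- The number of overpartitions of `n`: the coefficient of `q^n` in
`∏_{k≥1} (1+q^k)/(1-q^k)`.  Since each factor with `k > n` contributes only `1`
to coefficients up to degree `n`, the product may be truncated at `k = n`. -/
noncomputable def pbar (n : ℕ) : ℤ :=
  PowerSeries.coeff n (∏ k ∈ Finset.Icc 1 n, fps k)

/-- The number of plane overpartitions of `n`: the coefficient of `q^n` in
`∏_{k≥1} ((1+q^k)/(1-q^k))^k`, truncated at `k = n` (factors with `k > n` do not
affect coefficients up to degree `n`). -/
noncomputable def plbar (n : ℕ) : ℤ :=
  PowerSeries.coeff n (∏ k ∈ Finset.Icc 1 n, fps k ^ k)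

/-- The number of overpartitions of `n` into odd parts: coefficient of `q^n` in
`∏_{k≥1} (1+q^(2k-1))/(1-q^(2k-1))`, truncated at `k = n`. -/
noncomputable def pobar (n : ℕ) : ℤ :=
  PowerSeries.coeff n (∏ k ∈ Finset.Icc 1 n, fps (2 * k - 1))

/-!
Modulo 4, `(1 + x)² = (1 - x)² + 4x ≡ (1 - x)²`, so each factor `(1 + q^k)/(1 - q^k)` squares
to `1` and `∏ ((1 + q^k)/(1 - q^k))^k` reduces to the product of the factors with `k` odd.
Both sides are then products over odd `k`, differing only in factors with `k > n`; these are
`≡ 1 mod q^(n+1)` and do not affect the coefficient of `q^n`.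
-/

section

variable {R : Type*} [CommRing R]

theorem sq_eq_one_of_mul_one_sub_eq_one_add (h4 : (4 : R) = 0) {u x : R}
    (hx : IsUnit (1 - x)) (hu : u * (1 - x) = 1 + x) : u ^ 2 = 1 :=
  (hx.pow 2).mul_left_cancel <| by linear_combination (u * (1 - x) + 1 + x) * hu + x * h4

theorem dvd_prod_sub_one {ι : Type*} {a : R} {s : Finset ι} {f : ι → R}
    (h : ∀ i ∈ s, a ∣ f i - 1) : a ∣ ∏ i ∈ s, f i - 1 :=
  Finset.prod_induction f (fun y => a ∣ y - 1)
    (fun y z hy hz => by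
      rw [show y * z - 1 = (y - 1) * z + (z - 1) by ring]
      exact dvd_add (hy.mul_right z) hz)
    (by simp) h

theorem PowerSeries.coeff_mul_of_X_pow_dvd_sub_one {n : ℕ} {f g : R⟦X⟧}
    (hg : X ^ (n + 1) ∣ g - 1) : coeff n (g * f) = coeff n f := by
  obtain ⟨h, hh⟩ := hg
  rw [show g * f = f + X ^ (n + 1) * (h * f) by linear_combination f * hh, map_add,
    coeff_X_pow_mul', if_neg (by omega), add_zero]

theorem PowerSeries.coeff_prod_sdiff {n : ℕ} {s t : Finset ℕ} (hst : s ⊆ t) {f : ℕ → R⟦X⟧}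
    (hlarge : ∀ m ∈ t \ s, n < m) (hf : ∀ m ∈ t \ s, X ^ m ∣ f m - 1) :
    coeff n (∏ m ∈ t, f m) = coeff n (∏ m ∈ s, f m) := by
  rw [← Finset.prod_sdiff hst]
  refine coeff_mul_of_X_pow_dvd_sub_one (dvd_prod_sub_one fun m hm => ?_)
  exact (pow_dvd_pow X (hlarge m hm)).trans (hf m hm)

theorem fps_mul_one_sub_X_pow {k : ℕ} (hk : k ≠ 0) : fps k * (1 - X ^ k) = 1 + X ^ k := by
  rw [fps, mul_assoc, invOfUnit_mul _ _ (by simp [hk]), mul_one]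

theorem map_fps_mul_one_sub_X_pow {k : ℕ} (hk : k ≠ 0) :
    map (Int.castRingHom R) (fps k) * (1 - X ^ k) = 1 + X ^ k := by
  simpa using congrArg (map (Int.castRingHom R)) (fps_mul_one_sub_X_pow hk)

theorem X_pow_dvd_map_fps_sub_one {k : ℕ} (hk : k ≠ 0) :
    X ^ k ∣ map (Int.castRingHom R) (fps k) - 1 :=
  ⟨map (Int.castRingHom R) (fps k) + 1, by
    linear_combination map_fps_mul_one_sub_X_pow (R := R) hk⟩

theorem map_fps_sq (h4 : (4 : R) = 0) {k : ℕ} (hk : k ≠ 0) :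
    map (Int.castRingHom R) (fps k) ^ 2 = 1 :=
  sq_eq_one_of_mul_one_sub_eq_one_add (by rw [← map_ofNat C, h4, map_zero])
    (isUnit_iff_constantCoeff.mpr (by simp [hk])) (map_fps_mul_one_sub_X_pow hk)

theorem prod_map_fps_pow_self (h4 : (4 : R) = 0) (n : ℕ) :
    ∏ k ∈ Finset.Icc 1 n, map (Int.castRingHom R) (fps k) ^ k =
      ∏ k ∈ (Finset.Icc 1 n).filter Odd, map (Int.castRingHom R) (fps k) := by
  rw [Finset.prod_filter]
  refine Finset.prod_congr rfl fun k hk => ?_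
  rw [pow_eq_pow_mod k (map_fps_sq h4 (Nat.one_le_iff_ne_zero.mp (Finset.mem_Icc.mp hk).1))]
  rcases Nat.even_or_odd k with he | ho
  · rw [Nat.even_iff.mp he, pow_zero, if_neg (Nat.not_odd_iff_even.mpr he)]
  · rw [Nat.odd_iff.mp ho, pow_one, if_pos ho]

theorem coeff_prod_map_fps_two_mul_sub_one (n : ℕ) :
    coeff n (∏ k ∈ Finset.Icc 1 n, map (Int.castRingHom R) (fps (2 * k - 1))) =
      coeff n (∏ k ∈ (Finset.Icc 1 n).filter Odd, map (Int.castRingHom R) (fps k)) := by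
  have hinj : Set.InjOn (fun k => 2 * k - 1) (Finset.Icc 1 n) := fun a ha b hb hab => by
    simp only [Finset.coe_Icc, Set.mem_Icc] at ha hb hab
    omega
  rw [← Finset.prod_image (f := fun m => map (Int.castRingHom R) (fps m)) hinj]
  refine coeff_prod_sdiff (fun m hm => ?_) (fun m hm => ?_) (fun m hm => ?_)
  all_goals simp only [Finset.mem_sdiff, Finset.mem_filter, Finset.mem_image, Finset.mem_Icc,
    Nat.odd_iff] at hm ⊢
  · exact ⟨(m + 1) / 2, by omega, by omega⟩
  · omega
  · exact X_pow_dvd_map_fps_sub_one (by omega)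

end

/-- `∏_{n≥1} ((1+q^n)/(1-q^n))^n ≡ ∏_{n≥1} (1+q^(2n-1))/(1-q^(2n-1)) (mod 4)`
coefficient-wise. -/
theorem plbar_congr_pobar_mod_four (n : ℕ) : plbar n ≡ pobar n [ZMOD 4] := by
  refine (ZMod.intCast_eq_intCast_iff _ _ 4).mp ?_
  rw [plbar, pobar, ← eq_intCast (Int.castRingHom _), ← eq_intCast (Int.castRingHom _),
    ← coeff_map, ← coeff_map, map_prod (map _), map_prod (map _)]
  simp only [map_pow]
  rw [prod_map_fps_pow_self (by decide), coeff_prod_map_fps_two_mul_sub_one]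
end

section
/- For every integer n ≥ 1, the number of plane overpartitions pl̄(n) satisfies: pl̄(n) ≡ 2 (mod 4) if n is a perfect square or twice a perfect square, and pl̄(n) ≡ 0 (mod 4) otherwise. -/
open PowerSeries

open scoped Classical

open ArithmeticFunction
open scoped ArithmeticFunction.sigma

/-!
Since `(1 + q^k)/(1 - q^k) = 1 + 2 q^k/(1 - q^k)`, and modulo 4 we have `(1 + 2a)^k ≡ 1 + 2ka` and
`(1 + 2a)(1 + 2b) ≡ 1 + 2(a + b)`, the generating function of `pl̄` is congruent to
`1 + 2 ∑_k k q^k/(1 - q^k) = 1 + 2 ∑_n σ(n) q^n`. Hence `pl̄(n) ≡ 2σ(n) (mod 4)`, and `σ(n)` is odd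
exactly when every odd prime divides `n` to an even power, i.e. when `n` is a square or twice a
square.
-/

theorem Finset.odd_prod_iff {ι : Type*} {s : Finset ι} (f : ι → ℕ) :
    Odd (∏ i ∈ s, f i) ↔ ∀ i ∈ s, Odd (f i) := by
  induction s using Finset.cons_induction with
  | empty => simp
  | cons a s _ ih => rw [Finset.prod_cons, Nat.odd_mul, ih, Finset.forall_mem_cons]

namespace Nat

theorem odd_sigma_one_prime_pow_iff {p : ℕ} (hp : p.Prime) (e : ℕ) :
    Odd (σ 1 (p ^ e)) ↔ p = 2 ∨ Even e := by
  rw [sigma_one_apply_prime_pow hp, Finset.odd_sum_iff_odd_card_odd]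
  rcases hp.eq_two_or_odd' with rfl | hodd
  · have hfilter : {k ∈ Finset.range (e + 1) | Odd (2 ^ k)} = {0} := by
      ext k
      simp [← not_even_iff_odd, even_pow]
    simp [hfilter]
  · have hfilter : {k ∈ Finset.range (e + 1) | Odd (p ^ k)} = Finset.range (e + 1) :=
      Finset.filter_true_of_mem fun k _ => hodd.pow
    rw [hfilter, Finset.card_range, odd_add_one, not_odd_iff_even]
    have hp2 : p ≠ 2 := by rintro rfl; exact absurd hodd (by decide)
    rw [or_iff_right hp2]

theorem odd_sigma_one_iff {n : ℕ} (hn : n ≠ 0) :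
    Odd (σ 1 n) ↔ ∀ p ≠ 2, Even (n.factorization p) := by
  rw [isMultiplicative_sigma.multiplicative_factorization _ hn, Finsupp.prod,
    support_factorization, Finset.odd_prod_iff]
  refine forall_congr' fun p => ?_
  by_cases hp : p ∈ n.primeFactors
  · simp only [hp, odd_sigma_one_prime_pow_iff (prime_of_mem_primeFactors hp), true_imp_iff]
    tauto
  · simp [Finsupp.notMem_support_iff.mp (support_factorization n ▸ hp), hp]

theorem isSquare_or_eq_two_mul_sq_iff {n : ℕ} (hn : n ≠ 0) :
    (IsSquare n ∨ ∃ m, n = 2 * m ^ 2) ↔ ∀ p ≠ 2, Even (n.factorization p) := by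
  constructor
  · rintro (⟨r, rfl⟩ | ⟨m, rfl⟩) p hp
    · have hr : r ≠ 0 := by rintro rfl; simp at hn
      simp [factorization_mul hr hr]
    · have hm : m ≠ 0 := by rintro rfl; simp at hn
      simp [factorization_mul two_ne_zero (pow_ne_zero 2 hm), prime_two.factorization,
        hp.symm]
  · intro heven
    set f := Finsupp.mapRange (· / 2) (Nat.zero_div 2) n.factorization
    have hprime : ∀ p ∈ f.support, p.Prime := fun p hp =>
      prime_of_mem_primeFactors (Finsupp.support_mapRange hp)
    have hf : (f.prod (· ^ ·)).factorization = f := prod_pow_factorization_eq_self hprime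
    set m := f.prod (· ^ ·)
    have hm : m ≠ 0 := Finset.prod_ne_zero_iff.mpr fun p hp => pow_ne_zero _ (hprime p hp).ne_zero
    have hsplit : n = 2 ^ (n.factorization 2 % 2) * m ^ 2 := by
      refine eq_of_factorization_eq hn (by positivity) fun p => ?_
      rw [factorization_mul (by positivity) (by positivity), factorization_pow, factorization_pow,
        hf, prime_two.factorization]
      simp only [Finsupp.add_apply, Finsupp.smul_apply, Finsupp.single_apply, smul_eq_mul,
        Finsupp.mapRange_apply, f]
      split_ifs with hp
      · subst hp; omega
      · obtain ⟨r, hr⟩ := heven p (Ne.symm hp); omega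
    rcases mod_two_eq_zero_or_one (n.factorization 2) with h | h <;> rw [h] at hsplit
    · exact Or.inl ⟨m, by rw [hsplit]; ring⟩
    · exact Or.inr ⟨m, by rw [hsplit]; ring⟩

end Nat

section FourEqZero

variable {A : Type*} [CommRing A]

theorem one_add_two_mul_pow_of_four_eq_zero (h4 : (4 : A) = 0) (a : A) (k : ℕ) :
    (1 + 2 * a) ^ k = 1 + 2 * (k * a) := by
  induction k with
  | zero => simp
  | succ k ih =>
    rw [pow_succ, ih]
    push_cast
    linear_combination (k * a ^ 2) * h4

theorem prod_one_add_two_mul_of_four_eq_zero (h4 : (4 : A) = 0) {ι : Type*} (s : Finset ι)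
    (f : ι → A) : ∏ i ∈ s, (1 + 2 * f i) = 1 + 2 * ∑ i ∈ s, f i := by
  induction s using Finset.cons_induction with
  | empty => simp
  | cons i s _ ih =>
    rw [Finset.prod_cons, ih, Finset.sum_cons]
    linear_combination (f i * ∑ j ∈ s, f j) * h4

end FourEqZero

section Expand

/-- `q^k / (1 - q^k) = ∑_{m ≥ 1} q^{km}`. -/
noncomputable def lambertTerm (R : Type*) [CommRing R] (k : ℕ) : R⟦X⟧ :=
  mk fun n => if 0 < n ∧ k ∣ n then 1 else 0

variable {R : Type*} [CommRing R]

theorem invOfUnit_one_sub_X_pow {k : ℕ} (hk : k ≠ 0) :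
    invOfUnit (1 - X ^ k : R⟦X⟧) 1 = expand k hk (mk 1) := by
  refine left_inv_eq_right_inv (invOfUnit_mul _ 1 (by simp [hk])) ?_
  rw [← expand_X k hk, ← map_one (expand k hk), ← map_sub, ← map_mul, mul_comm,
    mk_one_mul_one_sub_eq_one, map_one]

theorem expand_X_mul_mk_one {k : ℕ} (hk : k ≠ 0) :
    expand k hk (X * mk 1 : R⟦X⟧) = lambertTerm R k := by
  ext n
  rw [coeff_expand, lambertTerm, coeff_mk]
  split_ifs with hkn h h
  · obtain ⟨m, rfl⟩ := hkn
    rw [Nat.mul_div_cancel_left _ (Nat.pos_of_ne_zero hk)]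
    obtain ⟨m, rfl⟩ := Nat.exists_eq_succ_of_ne_zero (right_ne_zero_of_mul h.1.ne')
    simp [coeff_succ_X_mul]
  · obtain ⟨m, rfl⟩ := hkn
    have hm : m = 0 := by simp_all [Nat.pos_of_ne_zero hk]
    simp [hm]
  · exact absurd h.2 hkn
  · rfl

theorem map_lambertTerm {S : Type*} [CommRing S] (f : R →+* S) (k : ℕ) :
    map f (lambertTerm R k) = lambertTerm S k := by
  ext n
  simp only [lambertTerm, coeff_map, coeff_mk]
  split_ifs <;> simp

end Expand

theorem fps_eq_one_add_two_mul_lambertTerm {k : ℕ} (hk : k ≠ 0) :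
    fps k = 1 + 2 * lambertTerm ℤ k := by
  have hgeom : (1 + X) * mk 1 = (1 : ℤ⟦X⟧) + 2 * (X * mk 1) := by
    linear_combination (mk_one_mul_one_sub_eq_one ℤ)
  rw [fps, invOfUnit_one_sub_X_pow hk, ← expand_X k hk, ← map_one (expand k hk), ← map_add,
    ← map_mul, hgeom]
  simp [map_ofNat, expand_X_mul_mk_one]

theorem plbar_modEq_two_mul_sigma {n : ℕ} (hn : n ≠ 0) : plbar n ≡ 2 * σ 1 n [ZMOD 4] := by
  have h4 : (4 : (ZMod 4)⟦X⟧) = 0 := by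
    rw [← map_ofNat (C (R := ZMod 4)) 4]
    exact (map_eq_zero_iff _ C_injective).mpr rfl
  have hfactor : ∀ k ∈ Finset.Icc 1 n, map (Int.castRingHom (ZMod 4)) (fps k ^ k) =
      1 + 2 * ((k : (ZMod 4)⟦X⟧) * lambertTerm (ZMod 4) k) := by
    intro k hk
    have hk0 : k ≠ 0 := Nat.one_le_iff_ne_zero.mp (Finset.mem_Icc.mp hk).1
    rw [fps_eq_one_add_two_mul_lambertTerm hk0, map_pow, map_add, map_mul, map_one, map_ofNat,
      map_lambertTerm, one_add_two_mul_pow_of_four_eq_zero h4]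
  have hdiv : {k ∈ Finset.Icc 1 n | k ∣ n} = n.divisors := by
    rw [Nat.divisors, Finset.Ico_add_one_right_eq_Icc]
  refine (ZMod.intCast_eq_intCast_iff _ _ 4).mp ?_
  calc ((plbar n : ℤ) : ZMod 4)
      = coeff n (map (Int.castRingHom (ZMod 4)) (∏ k ∈ Finset.Icc 1 n, fps k ^ k)) := by
        rw [coeff_map]; rfl
    _ = coeff n (1 + 2 * ∑ k ∈ Finset.Icc 1 n, (k : (ZMod 4)⟦X⟧) * lambertTerm (ZMod 4) k) := by
        rw [map_prod, Finset.prod_congr rfl hfactor, prod_one_add_two_mul_of_four_eq_zero h4]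
    _ = 2 * ∑ k ∈ Finset.Icc 1 n, if k ∣ n then (k : ZMod 4) else 0 := by
        have hcoeff (k : ℕ) : coeff n ((k : (ZMod 4)⟦X⟧) * lambertTerm (ZMod 4) k) =
            if k ∣ n then (k : ZMod 4) else 0 := by
          rw [← map_natCast C, coeff_C_mul, lambertTerm, coeff_mk]
          simp [Nat.pos_of_ne_zero hn]
        rw [map_add, coeff_one, if_neg hn, zero_add, ← map_ofNat C, coeff_C_mul, map_sum]
        simp only [hcoeff]
    _ = ((2 * σ 1 n : ℤ) : ZMod 4) := by
        rw [← Finset.sum_filter, hdiv, sigma_one_apply]; push_cast; rfl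

/-- For `n ≥ 1`, `pl̄(n) ≡ 2 (mod 4)` if `n` is a square or twice a square, and
`pl̄(n) ≡ 0 (mod 4)` otherwise. -/
theorem plbar_mod_four (n : ℕ) (hn : 1 ≤ n) :
    plbar n ≡ (if IsSquare n ∨ (∃ m, n = 2 * m ^ 2) then 2 else 0) [ZMOD 4] := by
  have hn0 : n ≠ 0 := by omega
  refine (plbar_modEq_two_mul_sigma hn0).trans ?_
  split_ifs with hsq <;>
    rw [Nat.isSquare_or_eq_two_mul_sq_iff hn0, ← Nat.odd_sigma_one_iff hn0] at hsq
  · obtain ⟨t, ht⟩ := hsq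
    exact Int.modEq_iff_dvd.mpr ⟨-t, by rw [ht]; push_cast; ring⟩
  · obtain ⟨t, ht⟩ := Nat.not_odd_iff_even.mp hsq
    exact Int.modEq_iff_dvd.mpr ⟨-t, by rw [ht]; push_cast; ring⟩
end

section
/- For every integer n > 1, pl̄(n) ≡ 2·∏_{p | n, p odd prime} (ord_p(n)+1) (mod 4), where the product is over odd primes dividing n and ord_p(n) is the p-adic valuation of n. Equivalently, pl̄(n) ≡ 2·d_odd(n) (mod 4) where d_odd(n) is the number of odd divisors of n. -/
/-!
Modulo 4 every factor `(1+q^k)/(1-q^k) = 1 + 2·q^k/(1-q^k)` has the form `1 + 2h`, and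
`(1+2h)^2 ≡ 1`, `(1+2h)(1+2h') ≡ 1 + 2(h+h')`. Hence the factors with `k` even drop out and
`∏ ((1+q^k)/(1-q^k))^k ≡ 1 + 2 ∑_{k odd} q^k/(1-q^k) (mod 4)`, whose `n`-th coefficient is twice
the number of odd divisors of `n`. The odd divisors of `n` are the divisors of its odd part,
and there are `∏_{p odd} (ord_p(n) + 1)` of them.
-/

open PowerSeries

open Finset

namespace Nat

theorem divisors_ordCompl {p n : ℕ} (hp : p.Prime) (hn : n ≠ 0) :
    (ordCompl[p] n).divisors = {d ∈ n.divisors | ¬p ∣ d} := by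
  ext d
  simp only [mem_filter, mem_divisors]
  constructor
  · rintro ⟨hd, -⟩
    exact ⟨⟨hd.trans (ordCompl_dvd n p), hn⟩, fun hpd => not_dvd_ordCompl hp hn (hpd.trans hd)⟩
  · rintro ⟨⟨hd, -⟩, hpd⟩
    exact ⟨dvd_ordCompl_of_dvd_not_dvd hd hpd, (ordCompl_pos p hn).ne'⟩

theorem card_divisors_filter_not_dvd {p n : ℕ} (hp : p.Prime) (hn : n ≠ 0) :
    #{d ∈ n.divisors | ¬p ∣ d} = ∏ q ∈ n.primeFactors with q ≠ p, (n.factorization q + 1) := by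
  have hfac : (ordCompl[p] n).factorization = n.factorization.erase p := factorization_ordCompl n p
  have hsupp : (ordCompl[p] n).primeFactors = n.primeFactors.erase p := by
    rw [← support_factorization, hfac, Finsupp.support_erase, support_factorization]
  rw [← divisors_ordCompl hp hn, card_divisors (ordCompl_pos p hn).ne', hsupp, filter_ne']
  exact prod_congr rfl fun q hq => by rw [hfac, Finsupp.erase_ne (ne_of_mem_erase hq)]

end Nat

section CharFour

variable {R : Type*} [CommRing R]

theorem one_add_two_mul_pow (h4 : (4 : R) = 0) (a : R) (k : ℕ) :
    (1 + 2 * a) ^ k = if Odd k then 1 + 2 * a else 1 := by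
  have hsq : (1 + 2 * a) ^ 2 = 1 := by linear_combination (a + a ^ 2) * h4
  obtain ⟨m, rfl | rfl⟩ := k.even_or_odd'
  · simp [pow_mul, hsq]
  · simp [pow_succ, pow_mul, hsq]

theorem prod_one_add_two_mul {ι : Type*} (h4 : (4 : R) = 0) (s : Finset ι) (f : ι → R) :
    ∏ i ∈ s, (1 + 2 * f i) = 1 + 2 * ∑ i ∈ s, f i := by
  classical
  induction s using Finset.induction_on with
  | empty => simp
  | insert a s ha ih =>
    rw [prod_insert ha, ih, sum_insert ha]
    linear_combination (f a * ∑ i ∈ s, f i) * h4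

theorem prod_one_add_two_mul_pow_self (h4 : (4 : R) = 0) (s : Finset ℕ) (f : ℕ → R) :
    ∏ k ∈ s, (1 + 2 * f k) ^ k = 1 + 2 * ∑ k ∈ s with Odd k, f k := by
  simp_rw [one_add_two_mul_pow h4, ← prod_filter, prod_one_add_two_mul h4]

end CharFour

namespace PowerSeries

/-- The series `∑_{k ∣ m} X^m`, i.e. `1 / (1 - X^k)` for `k ≠ 0`. -/
noncomputable def multiplesSeries (R : Type*) [Semiring R] (k : ℕ) : R⟦X⟧ :=
  mk fun m => if k ∣ m then 1 else 0

variable {R S : Type*}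

theorem coeff_X_pow_mul_multiplesSeries [Semiring R] {n : ℕ} (hn : n ≠ 0) (k : ℕ) :
    coeff n (X ^ k * multiplesSeries R k) = if k ∣ n then 1 else 0 := by
  rw [coeff_X_pow_mul', multiplesSeries, coeff_mk]
  by_cases hkn : k ≤ n
  · simp only [if_pos hkn, Nat.dvd_sub_iff_left hkn dvd_rfl]
  · rw [if_neg hkn, if_neg fun hdvd => hkn (Nat.le_of_dvd (Nat.pos_of_ne_zero hn) hdvd)]

theorem one_sub_X_pow_mul_multiplesSeries [Ring R] {k : ℕ} (hk : k ≠ 0) :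
    (1 - X ^ k) * multiplesSeries R k = 1 := by
  ext m
  rw [sub_mul, one_mul, map_sub, coeff_one]
  rcases eq_or_ne m 0 with rfl | hm
  · simp [multiplesSeries, coeff_X_pow_mul', hk]
  · rw [coeff_X_pow_mul_multiplesSeries hm, if_neg hm, multiplesSeries, coeff_mk, sub_self]

theorem map_multiplesSeries [Semiring R] [Semiring S] (f : R →+* S) (k : ℕ) :
    map f (multiplesSeries R k) = multiplesSeries S k := by
  ext m
  simp [multiplesSeries, apply_ite f]

end PowerSeries

theorem fps_eq_one_add_two_mul {k : ℕ} (hk : k ≠ 0) :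
    fps k = 1 + 2 * (X ^ k * multiplesSeries ℤ k) := by
  have hinv : invOfUnit (1 - X ^ k) 1 = multiplesSeries ℤ k := by
    calc invOfUnit (1 - X ^ k) 1
        = invOfUnit (1 - X ^ k) 1 * ((1 - X ^ k) * multiplesSeries ℤ k) := by
          rw [one_sub_X_pow_mul_multiplesSeries hk, mul_one]
      _ = multiplesSeries ℤ k := by
          rw [← mul_assoc, invOfUnit_mul _ _ (by simp [hk]), one_mul]
  rw [fps, hinv]
  linear_combination one_sub_X_pow_mul_multiplesSeries (R := ℤ) hk

theorem intCast_plbar {R : Type*} [CommRing R] (h4 : (4 : R) = 0) {n : ℕ} (hn : n ≠ 0) :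
    (plbar n : R) = 2 * #{d ∈ n.divisors | Odd d} := by
  have h4' : (4 : R⟦X⟧) = 0 := by rw [← map_ofNat (C (R := R)) 4, h4, map_zero]
  have hmap : ∀ k ∈ Icc 1 n, map (Int.castRingHom R) (fps k ^ k)
      = (1 + 2 * (X ^ k * multiplesSeries R k)) ^ k := fun k hk => by
    rw [fps_eq_one_add_two_mul (Nat.one_le_iff_ne_zero.mp (mem_Icc.mp hk).1)]
    simp [map_multiplesSeries, map_ofNat]
  have hdiv : {k ∈ Icc 1 n | Odd k ∧ k ∣ n} = {d ∈ n.divisors | Odd d} := by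
    ext d
    simp only [mem_filter, mem_Icc, Nat.mem_divisors]
    constructor
    · rintro ⟨-, hodd, hdvd⟩
      exact ⟨⟨hdvd, hn⟩, hodd⟩
    · rintro ⟨⟨hdvd, -⟩, hodd⟩
      exact ⟨⟨hodd.pos, Nat.le_of_dvd (Nat.pos_of_ne_zero hn) hdvd⟩, hodd, hdvd⟩
  calc (plbar n : R)
      = coeff n (map (Int.castRingHom R) (∏ k ∈ Icc 1 n, fps k ^ k)) := by
        rw [plbar, coeff_map, eq_intCast]
    _ = coeff n (1 + 2 * ∑ k ∈ Icc 1 n with Odd k, X ^ k * multiplesSeries R k) := by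
        rw [map_prod, prod_congr rfl hmap, prod_one_add_two_mul_pow_self h4']
    _ = 2 * #{d ∈ n.divisors | Odd d} := by
        simp [coeff_one, hn, two_mul, coeff_X_pow_mul_multiplesSeries hn, sum_boole,
          filter_filter, hdiv]

/-- For `n > 1`, `pl̄(n) ≡ 2·∏_{p∣n, p odd prime} (ord_p(n)+1) (mod 4)`,
the product over odd primes dividing `n`; this product equals the number of odd
divisors of `n`. -/
theorem plbar_congr_odd_divisor_product (n : ℕ) (hn : 1 < n) :
    plbar n ≡
      2 * ∏ p ∈ n.primeFactors.filter (fun p => p ≠ 2), ((n.factorization p : ℤ) + 1)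
      [ZMOD 4] := by
  have hn0 : n ≠ 0 := by omega
  have hodd : {d ∈ n.divisors | Odd d} = {d ∈ n.divisors | ¬2 ∣ d} := by
    simp only [← Nat.not_even_iff_odd, even_iff_two_dvd]
  refine (ZMod.intCast_eq_intCast_iff _ _ 4).mp ?_
  rw [intCast_plbar rfl hn0, hodd, Nat.card_divisors_filter_not_dvd Nat.prime_two hn0]
  push_cast
  rfl
end
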